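/- Let i, k, r, s be positive integers and let n ≥ max{i-1, 2k-i-1} be an integer. Then, as integers, F^i_{r,s}(k,n) = (s-r)·F^i_{r,s}(k,n-k) + r·F^i_{r,s}(k,n-i) + F^i_{r,s}(k,n-k+i) - s·F^i_{r,s}(k,n-2k+i). -/
import Mathlib


/-- Auxiliary sequence: `genFibAux i k r s m` equals `F^i_{r,s}(k, m-1)`, i.e. the
four-parameters sequence indexed by `m = n + 1 ≥ 0`.  For `i ≤ k` the initial values
(`-1 ≤ n ≤ k-2`, i.e. `m < k`) are `r^⌊(n+1)/i⌋`, for `k < i` (`m < i`) they are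
`s^⌊(n+1)/k⌋`, and for `n ≥ max{k,i} - 1` the recurrence
`F(n) = r·F(n-i) + s·F(n-k)` holds. -/
def genFibAux (i k r s : ℕ) : ℕ → ℤ
  | m =>
    if m < max (max k i) 1 then
      if i ≤ k then (r : ℤ) ^ (m / i) else (s : ℤ) ^ (m / k)
    else
      r * genFibAux i k r s (m - max i 1) + s * genFibAux i k r s (m - max k 1)
  termination_by m => m
  decreasing_by all_goals omega

/-- The four-parameters sequence `F^i_{r,s}(k,n)` for integer `n ≥ -1`, with the
convention that it vanishes for `n ≤ -2`. -/
def genFib (i k r s : ℕ) (n : ℤ) : ℤ :=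
  if n < -1 then 0 else genFibAux i k r s (n + 1).toNat

lemma genFib_rec (i k r s : ℕ) (hi : 0 < i) (hk : 0 < k) (n : ℤ)
    (hn : max ((i : ℤ) - 1) ((k : ℤ) - 1) ≤ n) :
    genFib i k r s n = r * genFib i k r s (n - i) + s * genFib i k r s (n - k) := by
  have h1 : ¬ n < -1 := by simp at hn; omega
  have h2 : ¬ n - i < -1 := by simp at hn ⊢; omega
  have h3 : ¬ n - k < -1 := by simp at hn ⊢; omega
  simp only [genFib, if_neg h1, if_neg h2, if_neg h3]
  rw [genFibAux]
  have hmax : ¬ (n + 1).toNat < max (max k i) 1 := by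
    simp at hn ⊢; omega
  rw [if_neg hmax]
  have e1 : (n + 1).toNat - max i 1 = (n - i + 1).toNat := by simp at hn ⊢; omega
  have e2 : (n + 1).toNat - max k 1 = (n - k + 1).toNat := by simp at hn ⊢; omega
  rw [e1, e2]

/-- For positive integers `i, k, r, s` and integer
`n ≥ max{i-1, 2k-i-1}`,
`F^i_{r,s}(k,n) = (s-r)·F^i_{r,s}(k,n-k) + r·F^i_{r,s}(k,n-i) + F^i_{r,s}(k,n-k+i) - s·F^i_{r,s}(k,n-2k+i)`. -/
theorem genFib_four_term (i k r s : ℕ) (hi : 0 < i) (hk : 0 < k) (hr : 0 < r)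
    (hs : 0 < s) (n : ℤ) (hn : max ((i : ℤ) - 1) (2 * (k : ℤ) - i - 1) ≤ n) :
    genFib i k r s n =
      ((s : ℤ) - r) * genFib i k r s (n - k) + r * genFib i k r s (n - i) +
        genFib i k r s (n - k + i) - s * genFib i k r s (n - 2 * k + i) := by
  simp only [le_max_iff, max_le_iff] at hn
  have h1 := genFib_rec i k r s hi hk n (by simp; omega)
  have h2 := genFib_rec i k r s hi hk (n - k + i) (by simp; omega)
  have e1 : n - k + i - i = n - k := by ring
  have e2 : n - k + i - k = n - 2 * k + i := by ring
  rw [e1, e2] at h2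
  rw [h1, h2]; ring
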